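/- Let RG be a region graph satisfying Assumption 1 that is terminal-separable, let {d_R ∈ F^3 : R ∈ Π} satisfy conditions (1)–(3) over a finite field F, and let 𝓘_c be a character partition of Π. Then for every class Δ of 𝓘_c and every {i_1,i_2} ⊆ {1,2,3}: if Q ∈ Δ_{i_1,i_2} and d_Q ≠ 0, then d_{Q'} ∈ span{d_Q} for every Q' ∈ Δ_{i_1,i_2}. -/
import Mathlib


namespace SumNetworksPaper

/-- `SuperReg Adj Θ R` : `R` belongs to the super region generated by `Θ`:
the smallest set containing `Θ` and containing every vertex whose parent set
is nonempty and entirely contained in the set. -/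
inductive SuperReg {V : Type} (Adj : V → V → Prop) (Θ : Set V) : V → Prop
  | base {R : V} : R ∈ Θ → SuperReg Adj Θ R
  | step {R : V} : (∃ P, Adj P R) → (∀ P, Adj P R → SuperReg Adj Θ P) →
      SuperReg Adj Θ R

/-- The super region `reg(Θ)` as a set. -/
def superReg {V : Type} (Adj : V → V → Prop) (Θ : Set V) : Set V :=
  {R | SuperReg Adj Θ R}

/-- A region graph: a finite directed acyclic simple graph with three source
vertices `S 0, S 1, S 2` (which have no parents) and `n` terminal vertices
`T 0, …, T (n-1)`, in which every non-source vertex has at least two parents.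
`Adj P R` means that there is an edge from `P` to `R`, i.e. `P` is a parent of `R`. -/
structure RegionGraph (n : ℕ) where
  V : Type
  fintypeV : Fintype V
  Adj : V → V → Prop
  acyclic : ∀ v : V, ¬ Relation.TransGen Adj v v
  S : Fin 3 → V
  T : Fin n → V
  S_inj : Function.Injective S
  T_inj : Function.Injective T
  source_no_parent : ∀ (i : Fin 3) (v : V), ¬ Adj v (S i)
  two_parents : ∀ v : V, (∀ i : Fin 3, v ≠ S i) →
    ∃ p q : V, p ≠ q ∧ Adj p v ∧ Adj q v

namespace RegionGraph

variable {n : ℕ} (G : RegionGraph n)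

/-- The super region `reg(Θ)`. -/
def reg (Θ : Set G.V) : Set G.V := superReg G.Adj Θ

/-- `reg°(Θ) = reg(Θ) ∖ Θ`. -/
def regO (Θ : Set G.V) : Set G.V := G.reg Θ \ Θ

/-- `reg(S_i, S_j)`. -/
def regPair (i j : Fin 3) : Set G.V := G.reg {G.S i, G.S j}

/-- `u → v` : there is a directed path from `u` to `v` (possibly trivial). -/
def Reaches (u v : G.V) : Prop := Relation.ReflTransGen G.Adj u v

/-- `Π = reg(S_1,S_2) ∪ reg(S_1,S_3) ∪ reg(S_2,S_3)`. -/
def bigPi : Set G.V := G.regPair 0 1 ∪ G.regPair 0 2 ∪ G.regPair 1 2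

/-- `Ω_I` : vertices outside `Π` reaching exactly the terminals `T j`, `j ∈ I`. -/
def Omega (I : Set (Fin n)) : Set G.V :=
  {R | R ∉ G.bigPi ∧ ∀ j : Fin n, j ∈ I ↔ G.Reaches R (G.T j)}

/-- `Λ_I` : vertices of `Π` having a child in `Ω_I`. -/
def Lambda (I : Set (Fin n)) : Set G.V :=
  {Q | Q ∈ G.bigPi ∧ ∃ R, G.Adj Q R ∧ R ∈ G.Omega I}

/-- Assumption 1: no terminal vertex lies in `Π`. -/
def Assumption1 : Prop := ∀ j : Fin n, G.T j ∉ G.bigPi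

/-- Terminal-separability: `Ω_I = ∅` whenever `|I| > 1`. -/
def TerminalSeparable : Prop :=
  ∀ I : Set (Fin n), 1 < I.ncard → G.Omega I = ∅

/-- A linear code of the region graph over `F`. -/
def IsLinearCode (F : Type) [Field F] (d : G.V → Fin 3 → F) : Prop :=
  (∀ i : Fin 3, d (G.S i) = Pi.single i 1) ∧
  ∀ v : G.V, (∀ i : Fin 3, v ≠ G.S i) →
    d v ∈ Submodule.span F (d '' {p | G.Adj p v})

/-- A linear solution: a linear code giving `ᾱ = (1,1,1)` at every terminal. -/
def IsLinearSolution (F : Type) [Field F] (d : G.V → Fin 3 → F) : Prop :=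
  G.IsLinearCode F d ∧ ∀ j : Fin n, d (G.T j) = fun _ => 1

/-- Feasibility: existence of a linear solution over some finite field. -/
def Feasible : Prop :=
  ∃ (F : Type) (_ : Field F) (_ : Fintype F) (d : G.V → Fin 3 → F),
    G.IsLinearSolution F d

/-- Conditions (1)–(3) on a family `{d_R : R ∈ Π}`. -/
def Conds123 (F : Type) [Field F] (d : G.V → Fin 3 → F) : Prop :=
  (∀ i : Fin 3, d (G.S i) = Pi.single i 1) ∧
  (∀ R ∈ G.bigPi, (∀ i : Fin 3, R ≠ G.S i) →
    d R ∈ Submodule.span F (d '' {p | G.Adj p R})) ∧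
  ∀ j : Fin n, (fun _ => (1 : F)) ∈ Submodule.span F (d '' G.Lambda {j})

/-- `I` is a partition of `Π` into nonempty classes. -/
def IsPartitionOfPi (I : Set (Set G.V)) : Prop :=
  (∀ Δ ∈ I, Δ.Nonempty ∧ Δ ⊆ G.bigPi) ∧
  ⋃₀ I = G.bigPi ∧
  ∀ Δ ∈ I, ∀ Δ' ∈ I, Δ ≠ Δ' → Δ ∩ Δ' = ∅

/-- The three sources lie in three distinct classes of the partition. -/
def SourcesSeparated (I : Set (Set G.V)) : Prop :=
  ∀ Δ ∈ I, ∀ i j : Fin 3, G.S i ∈ Δ → G.S j ∈ Δ → i = j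

/-- `[S_i]_i = [S_i]_{i,j₁} ∪ [S_i]_{i,j₂}` for the class `Δ` of `S_i`. -/
def srcSub (i : Fin 3) (Δ : Set G.V) : Set G.V :=
  Δ ∩ ⋃ (j : Fin 3) (_ : j ≠ i), G.regPair i j

/-- `X` is a subclass of the class `Δ`. -/
def IsSubclass (Δ X : Set G.V) : Prop :=
  (∃ i : Fin 3, G.S i ∈ Δ ∧
    (X = G.srcSub i Δ ∨
      ∃ j k : Fin 3, j ≠ k ∧ j ≠ i ∧ k ≠ i ∧ X = Δ ∩ G.regPair j k)) ∨
  ((∀ i : Fin 3, G.S i ∉ Δ) ∧ ∃ i j : Fin 3, i ≠ j ∧ X = Δ ∩ G.regPair i j)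

/-- The two classes `Δ'`, `Δ''` are connected. -/
def ClassesConnected (Δ' Δ'' : Set G.V) : Prop :=
  (∃ (j : Fin n) (X' X'' : Set G.V),
      G.IsSubclass Δ' X' ∧ G.IsSubclass Δ'' X'' ∧ G.Lambda {j} ⊆ X' ∪ X'') ∨
  ∃ i j : Fin 3, i ≠ j ∧
    (G.reg (Δ' ∩ G.regPair i j) ∩ G.reg (Δ'' ∩ G.regPair i j)).Nonempty

/-- The partition `I` of `Π` is compatible. -/
def Compatible (I : Set (Set G.V)) : Prop :=
  G.SourcesSeparated I ∧
  (∀ Δ' ∈ I, ∀ Δ'' ∈ I, Δ' ≠ Δ'' → ¬ G.ClassesConnected Δ' Δ'') ∧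
  ∀ (j : Fin n) (i₁ i₂ : Fin 3), i₁ ≠ i₂ →
    ∀ Δ₁ ∈ I, ∀ Δ₂ ∈ I, G.S i₁ ∈ Δ₁ → G.S i₂ ∈ Δ₂ →
      ¬ (G.Lambda {j} ⊆ G.srcSub i₁ Δ₁ ∪ G.srcSub i₂ Δ₂ ∪
          ⋃₀ {X : Set G.V | ∃ Δ ∈ I, (∀ i : Fin 3, G.S i ∉ Δ) ∧
                X = Δ ∩ G.regPair i₁ i₂})

/-- `I'` is obtained from `I` by merging two connected classes. -/
def IsContractionStep (I I' : Set (Set G.V)) : Prop :=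
  ∃ Δ' Δ'', Δ' ∈ I ∧ Δ'' ∈ I ∧ Δ' ≠ Δ'' ∧ G.ClassesConnected Δ' Δ'' ∧
    I' = insert (Δ' ∪ Δ'') (I \ {Δ', Δ''})

/-- The trivial partition of `Π` into singletons. -/
def trivialPartition : Set (Set G.V) := {X | ∃ R ∈ G.bigPi, X = {R}}

/-- `Ic` is a character partition of `Π`. -/
def IsCharacterPartition (Ic : Set (Set G.V)) : Prop :=
  ∃ (L : ℕ) (c : ℕ → Set (Set G.V)),
    c 0 = G.trivialPartition ∧ c L = Ic ∧
    (∀ ℓ < L, G.SourcesSeparated (c ℓ) ∧ G.IsContractionStep (c ℓ) (c (ℓ + 1))) ∧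
    ((∃ Δ ∈ Ic, ∃ i j : Fin 3, i ≠ j ∧ G.S i ∈ Δ ∧ G.S j ∈ Δ) ∨
      ∀ Δ' ∈ Ic, ∀ Δ'' ∈ Ic, Δ' ≠ Δ'' → ¬ G.ClassesConnected Δ' Δ'')

/-- Property (a): `d_{Q'} ∈ span{d_Q, ᾱ}` for all `Q, Q'` in the class `Δ`. -/
def PropertyA (F : Type) [Field F] (d : G.V → Fin 3 → F) (Δ : Set G.V) : Prop :=
  ∀ Q ∈ Δ, ∀ Q' ∈ Δ, d Q' ∈ Submodule.span F {d Q, fun _ => (1 : F)}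

end RegionGraph

/-- Condition (C-IR) for a region graph with three terminals. -/
def RegionGraph.CIR (G : RegionGraph 3) : Prop :=
  ∃ (σ τ : Equiv.Perm (Fin 3)) (P₁ P₂ : G.V),
    P₁ ∈ G.regO {G.S (σ 1), G.S (σ 2)} ∧
    P₂ ∈ G.regO {G.S (σ 0), G.S (σ 1)} ∧
    G.Lambda {τ 0} = {G.S (σ 0), P₁} ∧
    G.Lambda {τ 1} = {P₁, P₂} ∧
    G.Lambda {τ 2} ⊆ G.reg {G.S (σ 0), P₂} ∪ G.reg {G.S (σ 0), G.S (σ 2)}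


namespace RegionGraph

variable {n : ℕ} {G : RegionGraph n}

lemma reg_mono {Θ₁ Θ₂ : Set G.V} (h : Θ₁ ⊆ Θ₂) : G.reg Θ₁ ⊆ G.reg Θ₂ := by
  intro x hx
  induction hx with
  | base hm => exact SuperReg.base (h hm)
  | step hex hall ih => exact SuperReg.step hex ih

lemma reg_subset_reg {Θ Ξ : Set G.V} (h : Θ ⊆ G.reg Ξ) : G.reg Θ ⊆ G.reg Ξ := by
  intro x hx
  induction hx with
  | base hm => exact h hm
  | step hex hall ih => exact SuperReg.step hex ih

lemma reg_subset_regPair {Θ : Set G.V} {i j : Fin 3} (h : Θ ⊆ G.regPair i j) :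
    G.reg Θ ⊆ G.regPair i j :=
  reg_subset_reg h

lemma not_source_of_parent {x p : G.V} (hp : G.Adj p x) : ∀ i : Fin 3, x ≠ G.S i := by
  intro i he
  exact G.source_no_parent i p (he ▸ hp)

lemma reg_subsingleton {Θ : Set G.V} {w : G.V} (h : Θ ⊆ {w}) : G.reg Θ ⊆ Θ := by
  intro x hx
  induction hx with
  | base hm => exact hm
  | @step x hex hall ih =>
    obtain ⟨p, hp⟩ := hex
    obtain ⟨a, b, hab, ha, hb⟩ := G.two_parents x (not_source_of_parent hp)
    have ha' : a ∈ Θ := ih a ha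
    have hb' : b ∈ Θ := ih b hb
    exact absurd ((h ha').trans (h hb').symm) hab

lemma regPair_comm (i j : Fin 3) : G.regPair i j = G.regPair j i := by
  unfold regPair
  rw [Set.pair_comm]

lemma regPair_subset_bigPi {i j : Fin 3} (h : i ≠ j) : G.regPair i j ⊆ G.bigPi := by
  have h01 : G.regPair 0 1 ⊆ G.bigPi := fun x hx => Or.inl (Or.inl hx)
  have h02 : G.regPair 0 2 ⊆ G.bigPi := fun x hx => Or.inl (Or.inr hx)
  have h12 : G.regPair 1 2 ⊆ G.bigPi := fun x hx => Or.inr hx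
  fin_cases i <;> fin_cases j <;>
    first
      | exact absurd rfl h
      | assumption
      | (rw [regPair_comm]; assumption)

lemma mem_bigPi_pair {x : G.V} (h : x ∈ G.bigPi) :
    ∃ i j : Fin 3, i ≠ j ∧ x ∈ G.regPair i j := by
  rcases h with (h | h) | h
  · exact ⟨0, 1, by decide, h⟩
  · exact ⟨0, 2, by decide, h⟩
  · exact ⟨1, 2, by decide, h⟩

/-- Descent lemma: a common point of two super regions yields a base point of
one lying in the super region of the other. -/
lemma reg_descend {Θ₁ Θ₂ : Set G.V} :
    ∀ x, x ∈ G.reg Θ₁ → x ∈ G.reg Θ₂ →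
      ∃ y, Relation.ReflTransGen G.Adj y x ∧
        ((y ∈ Θ₁ ∧ y ∈ G.reg Θ₂) ∨ (y ∈ Θ₂ ∧ y ∈ G.reg Θ₁)) := by
  haveI := G.fintypeV
  haveI : IsIrrefl G.V (Relation.TransGen G.Adj) := ⟨G.acyclic⟩
  have wf := Finite.wellFounded_of_trans_of_irrefl (Relation.TransGen G.Adj)
  intro x
  induction x using wf.induction with
  | _ x ih =>
    intro h1 h2
    have h1' : SuperReg G.Adj Θ₁ x := h1
    cases h1' with
    | base hb => exact ⟨x, Relation.ReflTransGen.refl, Or.inl ⟨hb, h2⟩⟩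
    | step hex hall =>
      have h2' : SuperReg G.Adj Θ₂ x := h2
      cases h2' with
      | base hb2 => exact ⟨x, Relation.ReflTransGen.refl, Or.inr ⟨hb2, h1⟩⟩
      | step hex2 hall2 =>
        obtain ⟨p, hp⟩ := hex
        obtain ⟨y, hy, hc⟩ := ih p (Relation.TransGen.single hp) (hall p hp) (hall2 p hp)
        exact ⟨y, hy.tail hp, hc⟩

end RegionGraph
namespace RegionGraph

variable {n : ℕ} {G : RegionGraph n} {F : Type} [Field F] {d : G.V → Fin 3 → F}

/-- One vector `ᾱ`. -/
local notation "av" => (fun _ => (1 : F) : Fin 3 → F)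

lemma span_coord_zero {s : Set (Fin 3 → F)} {m : Fin 3}
    (h : ∀ w ∈ s, w m = 0) {x : Fin 3 → F} (hx : x ∈ Submodule.span F s) : x m = 0 := by
  have hle : Submodule.span F s ≤ LinearMap.ker (LinearMap.proj m (R := F) (φ := fun _ : Fin 3 => F)) := by
    rw [Submodule.span_le]
    intro w hw
    simpa using h w hw
  simpa using hle hx

lemma d_coord_zero (hd : G.Conds123 F d) {i j m : Fin 3} (hij : i ≠ j)
    (hmi : m ≠ i) (hmj : m ≠ j) {x : G.V} (hx : x ∈ G.regPair i j) : d x m = 0 := by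
  induction hx with
  | base hm =>
    rcases hm with h | h
    · subst h; rw [hd.1 i]; exact Pi.single_eq_of_ne hmi 1
    · subst h; rw [hd.1 j]; exact Pi.single_eq_of_ne hmj 1
  | @step x hex hall ih =>
    obtain ⟨p, hp⟩ := hex
    have hxpi : x ∈ G.bigPi :=
      regPair_subset_bigPi hij (reg_subset_regPair (fun y hy => SuperReg.base hy)
        (SuperReg.step ⟨p, hp⟩ hall))
    have hmem := hd.2.1 x hxpi (not_source_of_parent hp)
    refine span_coord_zero ?_ hmem
    rintro w ⟨q, hq, rfl⟩
    exact ih q hq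

lemma reg_d_mem_span (hd : G.Conds123 F d) {i j : Fin 3} (hij : i ≠ j) {Θ : Set G.V}
    (hΘ : Θ ⊆ G.regPair i j) {x : G.V} (hx : x ∈ G.reg Θ) :
    d x ∈ Submodule.span F (d '' Θ) := by
  induction hx with
  | base hm => exact Submodule.subset_span ⟨_, hm, rfl⟩
  | @step x hex hall ih =>
    obtain ⟨p, hp⟩ := hex
    have hxpi : x ∈ G.bigPi :=
      regPair_subset_bigPi hij (reg_subset_regPair hΘ (SuperReg.step ⟨p, hp⟩ hall))
    have hmem := hd.2.1 x hxpi (not_source_of_parent hp)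
    have hle : Submodule.span F (d '' {q | G.Adj q x}) ≤ Submodule.span F (d '' Θ) := by
      rw [Submodule.span_le]
      rintro w ⟨q, hq, rfl⟩
      exact ih q hq
    exact hle hmem

lemma third_index {i j : Fin 3} (h : i ≠ j) : ∃ m : Fin 3, m ≠ i ∧ m ≠ j := by
  revert h; revert i j; decide

lemma av_coord (m : Fin 3) : (av) m = 1 := rfl

lemma span_line {v a b : Fin 3 → F} {m : Fin 3}
    (hav : a ∈ Submodule.span F {v, av}) (hbv : b ∈ Submodule.span F {v, av})
    (ham : a m = 0) (hbm : b m = 0) (ha0 : a ≠ 0) :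
    b ∈ Submodule.span F {a} := by
  obtain ⟨c1, c2, h1⟩ := Submodule.mem_span_pair.mp hav
  obtain ⟨c3, c4, h2⟩ := Submodule.mem_span_pair.mp hbv
  have hm1 : c1 * v m + c2 = 0 := by
    have := congrFun h1 m
    simpa [ham] using this
  have hm2 : c3 * v m + c4 = 0 := by
    have := congrFun h2 m
    simpa [hbm] using this
  have hc1 : c1 ≠ 0 := by
    rintro rfl
    apply ha0
    have hc2 : c2 = 0 := by simpa using hm1
    rw [← h1, hc2]
    funext t; simp
  refine Submodule.mem_span_singleton.mpr ⟨c3 * c1⁻¹, ?_⟩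
  have hc4 : c1 * c4 = c3 * c2 := by
    have e1 : c1 * v m = -c2 := eq_neg_of_add_eq_zero_left hm1
    have e2 : c3 * v m = -c4 := eq_neg_of_add_eq_zero_left hm2
    linear_combination c1 * e2 - c3 * e1
  funext t
  have ha' := congrFun h1 t
  have hb' := congrFun h2 t
  simp only [Pi.add_apply, Pi.smul_apply, smul_eq_mul, mul_one] at ha' hb' ⊢
  rw [← ha', ← hb']
  field_simp
  linear_combination -hc4

end RegionGraph
namespace RegionGraph

variable {n : ℕ} {G : RegionGraph n} {F : Type} [Field F] {d : G.V → Fin 3 → F}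

local notation "av" => (fun _ => (1 : F) : Fin 3 → F)

lemma av_mem_pair {v : Fin 3 → F} : (av) ∈ Submodule.span F {v, av} :=
  Submodule.subset_span (Set.mem_insert_of_mem _ rfl)

lemma mem_span_one_zero {x : Fin 3 → F} {m : Fin 3}
    (hx : x ∈ Submodule.span F {av}) (hm : x m = 0) : x = 0 := by
  obtain ⟨c, hc⟩ := Submodule.mem_span_singleton.mp hx
  have : c = 0 := by
    have := congrFun hc m
    simpa [hm] using this
  rw [← hc, this]; funext t; simp

lemma mem_pair_flip {v u : Fin 3 → F} {m : Fin 3}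
    (hu : u ∈ Submodule.span F {v, av}) (hm : u m = 0) (hu0 : u ≠ 0) :
    Submodule.span F {v, av} ≤ Submodule.span F {u, av} := by
  obtain ⟨c1, c2, h1⟩ := Submodule.mem_span_pair.mp hu
  have hc1 : c1 ≠ 0 := by
    rintro rfl
    apply hu0
    apply mem_span_one_zero _ hm
    rw [← h1]
    refine Submodule.mem_span_singleton.mpr ⟨c2, ?_⟩
    funext t; simp
  rw [Submodule.span_le]
  rintro w (rfl | rfl)
  · refine Submodule.mem_span_pair.mpr ⟨c1⁻¹, -(c1⁻¹ * c2), ?_⟩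
    funext t
    have := congrFun h1 t
    simp only [Pi.add_apply, Pi.smul_apply, smul_eq_mul, mul_one] at this ⊢
    field_simp
    linear_combination -this
  · exact av_mem_pair

/-- The plane associated to a class: `span (d '' Δ ∪ {ᾱ})`. -/
def Pl (F : Type) [Field F] {n : ℕ} {G : RegionGraph n} (d : G.V → Fin 3 → F)
    (Δ : Set G.V) : Submodule F (Fin 3 → F) :=
  Submodule.span F (insert (fun _ => (1 : F)) (d '' Δ))

lemma av_mem_Pl {Δ : Set G.V} : (av) ∈ Pl F d Δ :=
  Submodule.subset_span (Set.mem_insert _ _)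

lemma d_mem_Pl {Δ : Set G.V} {Q : G.V} (h : Q ∈ Δ) : d Q ∈ Pl F d Δ :=
  Submodule.subset_span (Set.mem_insert_of_mem _ ⟨Q, h, rfl⟩)

lemma Pl_le_pair {Δ : Set G.V} {v : Fin 3 → F}
    (hP : ∀ Q ∈ Δ, d Q ∈ Submodule.span F {v, av}) : Pl F d Δ ≤ Submodule.span F {v, av} := by
  rw [Pl, Submodule.span_le]
  rintro w (rfl | ⟨Q, hQ, rfl⟩)
  · exact av_mem_pair
  · exact hP Q hQ

lemma pair_le_Pl {Δ : Set G.V} {u : Fin 3 → F} (hu : u ∈ Pl F d Δ) :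
    Submodule.span F {u, av} ≤ Pl F d Δ := by
  rw [Submodule.span_le]
  rintro w (rfl | rfl)
  · exact hu
  · exact av_mem_Pl

lemma Pl_eq_pair {Δ : Set G.V} {v u : Fin 3 → F} {m : Fin 3}
    (hP : ∀ Q ∈ Δ, d Q ∈ Submodule.span F {v, av})
    (hu : u ∈ Pl F d Δ) (hm : u m = 0) (hu0 : u ≠ 0) :
    Pl F d Δ = Submodule.span F {u, av} := by
  refine le_antisymm ((Pl_le_pair hP).trans (mem_pair_flip (Pl_le_pair hP hu) hm hu0))
    (pair_le_Pl hu)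

lemma span_one_le_Pl {Δ : Set G.V} : Submodule.span F {av} ≤ Pl F d Δ := by
  rw [Submodule.span_le]
  rintro w rfl
  exact av_mem_Pl

lemma Pl_of_zero {Δ : Set G.V} (h : ∀ Q ∈ Δ, d Q = 0) :
    Pl F d Δ = Submodule.span F {av} := by
  refine le_antisymm ?_ span_one_le_Pl
  rw [Pl, Submodule.span_le]
  rintro w (rfl | ⟨Q, hQ, rfl⟩)
  · exact Submodule.mem_span_singleton_self _
  · rw [h Q hQ]; exact Submodule.zero_mem _

lemma Pl_union {Δ' Δ'' : Set G.V} : Pl F d (Δ' ∪ Δ'') = Pl F d Δ' ⊔ Pl F d Δ'' := by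
  rw [Pl, Pl, Pl, ← Submodule.span_union]
  congr 1
  rw [Set.image_union]
  ext w
  simp only [Set.mem_insert_iff, Set.mem_union]
  tauto

lemma d_zero_of_mem_span_one (hd : G.Conds123 F d) {x : G.V} (hx : x ∈ G.bigPi)
    (h : d x ∈ Submodule.span F {av}) : d x = 0 := by
  obtain ⟨i, j, hij, hp⟩ := mem_bigPi_pair hx
  obtain ⟨m, hmi, hmj⟩ := third_index hij
  exact mem_span_one_zero h (d_coord_zero hd hij hmi hmj hp)

lemma av_ne_zero : (av) ≠ (0 : Fin 3 → F) := by
  intro h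
  have := congrFun h 0
  simp at this

end RegionGraph
namespace RegionGraph

variable {n : ℕ} {G : RegionGraph n} {F : Type} [Field F] {d : G.V → Fin 3 → F}

local notation "av" => (fun _ => (1 : F) : Fin 3 → F)

lemma subclass_subset {Δ X : Set G.V} (h : G.IsSubclass Δ X) : X ⊆ Δ := by
  rcases h with ⟨i, _, rfl | ⟨j, k, _, _, _, rfl⟩⟩ | ⟨_, i, j, _, rfl⟩
  · exact Set.inter_subset_left
  · exact Set.inter_subset_left
  · exact Set.inter_subset_left

lemma pairSub_line (hd : G.Conds123 F d) {Δ : Set G.V} {v : Fin 3 → F}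
    (hP : ∀ Q ∈ Δ, d Q ∈ Submodule.span F {v, av}) {j k : Fin 3} (hjk : j ≠ k) :
    ∃ u0 k0, u0 k0 = (0 : F) ∧ ∀ y ∈ Δ ∩ G.regPair j k, d y ∈ Submodule.span F {u0} := by
  obtain ⟨m, hmj, hmk⟩ := third_index hjk
  by_cases hz : ∃ y0 ∈ Δ ∩ G.regPair j k, d y0 ≠ 0
  · obtain ⟨y0, hy0, h0⟩ := hz
    refine ⟨d y0, m, d_coord_zero hd hjk hmj hmk hy0.2, fun y hy => ?_⟩
    exact span_line (hP _ hy0.1) (hP _ hy.1) (d_coord_zero hd hjk hmj hmk hy0.2)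
      (d_coord_zero hd hjk hmj hmk hy.2) h0
  · push_neg at hz
    refine ⟨0, 0, rfl, fun y hy => ?_⟩
    rw [hz y hy]
    exact Submodule.zero_mem _

lemma exists_ne_fin3 (i : Fin 3) : ∃ k : Fin 3, k ≠ i := by
  revert i; decide

lemma d_source_ne_zero (hd : G.Conds123 F d) (i : Fin 3) : d (G.S i) ≠ 0 := by
  rw [hd.1 i]
  intro h
  have := congrFun h i
  simp at this

lemma subclass_line (hd : G.Conds123 F d) {Δ X : Set G.V} (hsub : G.IsSubclass Δ X)
    {v : Fin 3 → F} (hP : ∀ Q ∈ Δ, d Q ∈ Submodule.span F {v, av}) :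
    ∃ u0 k0, u0 k0 = (0 : F) ∧ ∀ y ∈ X, d y ∈ Submodule.span F {u0} := by
  rcases hsub with ⟨i, hSi, rfl | ⟨j, k, hjk, _, _, rfl⟩⟩ | ⟨_, i, j, hij, rfl⟩
  · obtain ⟨k0, hk0⟩ := exists_ne_fin3 i
    refine ⟨d (G.S i), k0, by rw [hd.1 i]; exact Pi.single_eq_of_ne hk0 1, fun y hy => ?_⟩
    obtain ⟨hyΔ, hyU⟩ := hy
    simp only [Set.mem_iUnion] at hyU
    obtain ⟨j, hji, hyp⟩ := hyU
    obtain ⟨m, hmi, hmj⟩ := third_index (Ne.symm hji)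
    refine span_line (hP _ hSi) (hP _ hyΔ) ?_ (d_coord_zero hd (Ne.symm hji) hmi hmj hyp)
      (d_source_ne_zero hd i)
    rw [hd.1 i]; exact Pi.single_eq_of_ne hmi 1
  · exact pairSub_line hd hP hjk
  · exact pairSub_line hd hP hij

lemma conn_case_a (hd : G.Conds123 F d) {Δ' Δ'' : Set G.V}
    {v' v'' : Fin 3 → F}
    (hP' : ∀ Q ∈ Δ', d Q ∈ Submodule.span F {v', av})
    (hP'' : ∀ Q ∈ Δ'', d Q ∈ Submodule.span F {v'', av})
    {jj : Fin n} {X' X'' : Set G.V}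
    (hs' : G.IsSubclass Δ' X') (hs'' : G.IsSubclass Δ'' X'')
    (hsub : G.Lambda {jj} ⊆ X' ∪ X'') :
    (∃ y ∈ Δ', d y ≠ 0) ∧ (∃ y ∈ Δ'', d y ≠ 0) ∧ Pl F d Δ' = Pl F d Δ'' := by
  obtain ⟨u0', k0', hk0', hline'⟩ := subclass_line hd hs' hP'
  obtain ⟨u0'', k0'', hk0'', hline''⟩ := subclass_line hd hs'' hP''
  have hα : (av) ∈ Submodule.span F (d '' G.Lambda {jj}) := hd.2.2 jj
  have hle : Submodule.span F (d '' G.Lambda {jj}) ≤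
      Submodule.span F (d '' X') ⊔ Submodule.span F (d '' X'') := by
    rw [← Submodule.span_union, Submodule.span_le]
    rintro w ⟨y, hy, rfl⟩
    rcases hsub hy with h | h
    · exact Submodule.subset_span (Or.inl ⟨y, h, rfl⟩)
    · exact Submodule.subset_span (Or.inr ⟨y, h, rfl⟩)
  obtain ⟨u', hu', u'', hu'', hsum⟩ := Submodule.mem_sup.mp (hle hα)
  have hsp' : Submodule.span F (d '' X') ≤ Submodule.span F {u0'} := by
    rw [Submodule.span_le]; rintro w ⟨y, hy, rfl⟩; exact hline' y hy
  have hsp'' : Submodule.span F (d '' X'') ≤ Submodule.span F {u0''} := by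
    rw [Submodule.span_le]; rintro w ⟨y, hy, rfl⟩; exact hline'' y hy
  have hu'm : u' k0' = 0 :=
    span_coord_zero (fun w hw => by rw [Set.mem_singleton_iff] at hw; rw [hw]; exact hk0')
      (hsp' hu')
  have hu''m : u'' k0'' = 0 :=
    span_coord_zero (fun w hw => by rw [Set.mem_singleton_iff] at hw; rw [hw]; exact hk0'')
      (hsp'' hu'')
  have hu'0 : u' ≠ 0 := by
    rintro rfl
    have : u'' k0'' = 1 := by
      have := congrFun hsum k0''
      simpa using this
    rw [hu''m] at this
    exact zero_ne_one this
  have hu''0 : u'' ≠ 0 := by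
    rintro rfl
    have : u' k0' = 1 := by
      have := congrFun hsum k0'
      simpa using this
    rw [hu'm] at this
    exact zero_ne_one this
  have hu'Pl : u' ∈ Pl F d Δ' := by
    refine Submodule.span_le.mpr ?_ hu'
    rintro w ⟨y, hy, rfl⟩
    exact d_mem_Pl (subclass_subset hs' hy)
  have hu''Pl : u'' ∈ Pl F d Δ'' := by
    refine Submodule.span_le.mpr ?_ hu''
    rintro w ⟨y, hy, rfl⟩
    exact d_mem_Pl (subclass_subset hs'' hy)
  have e' : Pl F d Δ' = Submodule.span F {u', av} := Pl_eq_pair hP' hu'Pl hu'm hu'0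
  have e'' : Pl F d Δ'' = Submodule.span F {u'', av} := Pl_eq_pair hP'' hu''Pl hu''m hu''0
  have hmm' : u'' ∈ Submodule.span F {u', av} :=
    Submodule.mem_span_pair.mpr ⟨-1, 1, by
      funext t
      have := congrFun hsum t
      simp only [Pi.add_apply] at this
      simp only [Pi.add_apply, Pi.smul_apply, smul_eq_mul]
      linear_combination -this⟩
  have hmm'' : u' ∈ Submodule.span F {u'', av} :=
    Submodule.mem_span_pair.mpr ⟨-1, 1, by
      funext t
      have := congrFun hsum t
      simp only [Pi.add_apply] at this
      simp only [Pi.add_apply, Pi.smul_apply, smul_eq_mul]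
      linear_combination -this⟩
  have le1 : Pl F d Δ'' ≤ Pl F d Δ' := by
    rw [e', e'', Submodule.span_le]
    rintro w (rfl | rfl)
    · exact hmm'
    · exact av_mem_pair
  have le2 : Pl F d Δ' ≤ Pl F d Δ'' := by
    rw [e', e'', Submodule.span_le]
    rintro w (rfl | rfl)
    · exact hmm''
    · exact av_mem_pair
  refine ⟨?_, ?_, le_antisymm le2 le1⟩
  · by_contra h
    push_neg at h
    refine hu'0 ?_
    have hbot : Submodule.span F (d '' X') ≤ ⊥ := by
      rw [Submodule.span_le]
      rintro w ⟨y, hy, rfl⟩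
      rw [h y (subclass_subset hs' hy)]
      exact Submodule.zero_mem ⊥
    exact (Submodule.mem_bot F).mp (hbot hu')
  · by_contra h
    push_neg at h
    refine hu''0 ?_
    have hbot : Submodule.span F (d '' X'') ≤ ⊥ := by
      rw [Submodule.span_le]
      rintro w ⟨y, hy, rfl⟩
      rw [h y (subclass_subset hs'' hy)]
      exact Submodule.zero_mem ⊥
    exact (Submodule.mem_bot F).mp (hbot hu'')

end RegionGraph
namespace RegionGraph

variable {n : ℕ} {G : RegionGraph n} {F : Type} [Field F] {d : G.V → Fin 3 → F}

local notation "av" => (fun _ => (1 : F) : Fin 3 → F)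

/-- Two classes are linked if a member of one lies in the super region of a
subclass-part of the other. -/
def Linked (G : RegionGraph n) (Δ Γ : Set G.V) : Prop :=
  (∃ i j : Fin 3, i ≠ j ∧ ∃ x, x ∈ Δ ∧ x ∈ G.reg (Γ ∩ G.regPair i j)) ∨
  (∃ i j : Fin 3, i ≠ j ∧ ∃ x, x ∈ Γ ∧ x ∈ G.reg (Δ ∩ G.regPair i j))

lemma linked_of_regs {Δ Γ : Set G.V} {i j k l : Fin 3} (hij : i ≠ j) (hkl : k ≠ l)
    {x : G.V} (hx1 : x ∈ G.reg (Δ ∩ G.regPair i j)) (hx2 : x ∈ G.reg (Γ ∩ G.regPair k l)) :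
    Linked G Δ Γ := by
  obtain ⟨y, _, hc⟩ := reg_descend x hx1 hx2
  rcases hc with ⟨hy1, hy2⟩ | ⟨hy1, hy2⟩
  · exact Or.inl ⟨k, l, hkl, y, hy1.1, hy2⟩
  · exact Or.inr ⟨i, j, hij, y, hy1.1, hy2⟩

/-- The invariant maintained along the contraction sequence. -/
structure Inv (G : RegionGraph n) (F : Type) [Field F] (d : G.V → Fin 3 → F)
    (I : Set (Set G.V)) : Prop where
  part : G.IsPartitionOfPi I
  P1 : ∀ Δ ∈ I, ∃ v, ∀ Q ∈ Δ, d Q ∈ Submodule.span F {v, fun _ => (1 : F)}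
  P2 : ∀ Δ ∈ I, ∀ Γ ∈ I, Δ ≠ Γ → Linked G Δ Γ →
    Pl F d Δ ≤ Pl F d Γ ∨ Pl F d Γ ≤ Pl F d Δ
  PZ : ∀ Δ ∈ I, (∀ Q ∈ Δ, d Q = 0) → ∀ x ∈ Δ, ∀ y ∈ Δ, x = y
  PG : ∀ Δ ∈ I, ∀ x ∈ Δ, d x = 0 →
    Δ = {x} ∨ ∃ i j : Fin 3, i ≠ j ∧ x ∈ G.reg ((Δ \ {x}) ∩ G.regPair i j)

lemma conn_symm {Δ' Δ'' : Set G.V} (h : G.ClassesConnected Δ' Δ'') :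
    G.ClassesConnected Δ'' Δ' := by
  rcases h with ⟨j, X', X'', hs', hs'', hsub⟩ | ⟨i, j, hij, hne⟩
  · exact Or.inl ⟨j, X'', X', hs'', hs', by rw [Set.union_comm]; exact hsub⟩
  · exact Or.inr ⟨i, j, hij, by rw [Set.inter_comm]; exact hne⟩

lemma merge_cmp (hd : G.Conds123 F d) {I : Set (Set G.V)} (hI : Inv G F d I)
    {Δa Δb : Set G.V} (ha : Δa ∈ I) (hb : Δb ∈ I) (hab : Δa ≠ Δb)
    (hconn : G.ClassesConnected Δa Δb) :
    Pl F d Δa ≤ Pl F d Δb ∨ Pl F d Δb ≤ Pl F d Δa := by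
  rcases hconn with ⟨jj, X', X'', hs', hs'', hsub⟩ | ⟨i, j, hij, z, hz1, hz2⟩
  · obtain ⟨va, hva⟩ := hI.P1 Δa ha
    obtain ⟨vb, hvb⟩ := hI.P1 Δb hb
    exact Or.inl (le_of_eq (conn_case_a hd hva hvb hs' hs'' hsub).2.2)
  · exact hI.P2 Δa ha Δb hb hab (linked_of_regs hij hij hz1 hz2)

lemma Pl_eq_of_le_nonzero {Δa Δb : Set G.V}
    {va vb : Fin 3 → F}
    (hva : ∀ Q ∈ Δa, d Q ∈ Submodule.span F {va, av})
    (hvb : ∀ Q ∈ Δb, d Q ∈ Submodule.span F {vb, av})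
    (hd : G.Conds123 F d)
    {y0 : G.V} (hy0 : y0 ∈ Δa) (h0 : d y0 ≠ 0) (hpi : Δa ⊆ G.bigPi)
    (hle : Pl F d Δa ≤ Pl F d Δb) : Pl F d Δa = Pl F d Δb := by
  obtain ⟨i, j, hij, hp⟩ := mem_bigPi_pair (hpi hy0)
  obtain ⟨m, hmi, hmj⟩ := third_index hij
  have hm : d y0 m = 0 := d_coord_zero hd hij hmi hmj hp
  have ea : Pl F d Δa = Submodule.span F {d y0, av} := Pl_eq_pair hva (d_mem_Pl hy0) hm h0
  refine le_antisymm hle ?_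
  have : Pl F d Δb ≤ Submodule.span F {d y0, av} :=
    (Pl_le_pair hvb).trans (mem_pair_flip ((Pl_le_pair hvb) (hle (d_mem_Pl hy0))) hm h0)
  rw [ea]
  exact this

lemma merge_facts (hd : G.Conds123 F d) {I : Set (Set G.V)} (hI : Inv G F d I)
    {Δa Δb : Set G.V} (ha : Δa ∈ I) (hb : Δb ∈ I) (hab : Δa ≠ Δb)
    (hconn : G.ClassesConnected Δa Δb) :
    (Pl F d (Δa ∪ Δb) = Pl F d Δa ∨ Pl F d (Δa ∪ Δb) = Pl F d Δb) ∧
      (∃ v, ∀ Q ∈ Δa ∪ Δb, d Q ∈ Submodule.span F {v, av}) := by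
  have hsup : Pl F d (Δa ∪ Δb) = Pl F d Δa ⊔ Pl F d Δb := Pl_union
  have hM : Pl F d (Δa ∪ Δb) = Pl F d Δa ∨ Pl F d (Δa ∪ Δb) = Pl F d Δb := by
    rcases merge_cmp hd hI ha hb hab hconn with h | h
    · exact Or.inr (hsup.trans (sup_eq_right.mpr h))
    · exact Or.inl (hsup.trans (sup_eq_left.mpr h))
  refine ⟨hM, ?_⟩
  rcases hM with h | h
  · obtain ⟨va, hva⟩ := hI.P1 Δa ha
    exact ⟨va, fun Q hQ => (Pl_le_pair hva) (h ▸ d_mem_Pl hQ)⟩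
  · obtain ⟨vb, hvb⟩ := hI.P1 Δb hb
    exact ⟨vb, fun Q hQ => (Pl_le_pair hvb) (h ▸ d_mem_Pl hQ)⟩

lemma zero_side (hd : G.Conds123 F d) {I : Set (Set G.V)} (hI : Inv G F d I)
    {Δa Δb : Set G.V} (ha : Δa ∈ I) (hb : Δb ∈ I) (hab : Δa ≠ Δb)
    (hconn : G.ClassesConnected Δa Δb) (hz : ∀ Q ∈ Δa, d Q = 0) :
    ∃ x', Δa = {x'} ∧ (∃ k l : Fin 3, k ≠ l ∧ x' ∈ G.reg (Δb ∩ G.regPair k l)) ∧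
      ¬(∀ Q ∈ Δb, d Q = 0) := by
  obtain ⟨x', hx'⟩ := (hI.part.1 Δa ha).1
  have hsing : Δa = {x'} := by
    apply Set.eq_singleton_iff_unique_mem.mpr
    exact ⟨hx', fun y hy => hI.PZ Δa ha hz y hy x' hx'⟩
  rcases hconn with ⟨jj, X', X'', hs', hs'', hsub⟩ | ⟨k, l, hkl, z, hz1, hz2⟩
  · obtain ⟨va, hva⟩ := hI.P1 Δa ha
    obtain ⟨vb, hvb⟩ := hI.P1 Δb hb
    obtain ⟨⟨y, hy, hy0⟩, _, _⟩ := conn_case_a hd hva hvb hs' hs'' hsub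
    exact absurd (hz y hy) hy0
  · have hz1' : z ∈ Δa ∩ G.regPair k l :=
      reg_subsingleton (by rw [hsing]; exact Set.inter_subset_left) hz1
    have hzx : z = x' := by
      have := hz1'.1
      rw [hsing] at this
      exact this
    refine ⟨x', hsing, ⟨k, l, hkl, hzx ▸ hz2⟩, ?_⟩
    intro hzb
    obtain ⟨x'', hx''⟩ := (hI.part.1 Δb hb).1
    have hsingb : Δb = {x''} := Set.eq_singleton_iff_unique_mem.mpr
      ⟨hx'', fun y hy => hI.PZ Δb hb hzb y hy x'' hx''⟩
    have hz2' : z ∈ Δb ∩ G.regPair k l :=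
      reg_subsingleton (by rw [hsingb]; exact Set.inter_subset_left) hz2
    have : x' ∈ Δa ∩ Δb := ⟨hx', hzx ▸ hz2'.1⟩
    rw [hI.part.2.2 Δa ha Δb hb hab] at this
    exact this

lemma link_side (hd : G.Conds123 F d) {I : Set (Set G.V)} (hI : Inv G F d I)
    {Δa Δb : Set G.V} (ha : Δa ∈ I) (hb : Δb ∈ I) (hab : Δa ≠ Δb)
    (hconn : G.ClassesConnected Δa Δb) {Γ : Set G.V} (hΓ : Γ ∈ I)
    (hΓa : Γ ≠ Δa) (hΓb : Γ ≠ Δb) (hLk : Linked G Δa Γ) :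
    Pl F d Γ ≤ Pl F d (Δa ∪ Δb) ∨ Pl F d (Δa ∪ Δb) ≤ Pl F d Γ := by
  have hsup : Pl F d (Δa ∪ Δb) = Pl F d Δa ⊔ Pl F d Δb := Pl_union
  have hPΓ := hI.P2 Δa ha Γ hΓ (Ne.symm hΓa) hLk
  by_cases hza : ∀ Q ∈ Δa, d Q = 0
  · obtain ⟨x', hsing, ⟨k, l, hkl, hwit⟩, hnzb⟩ := zero_side hd hI ha hb hab hconn hza
    have hMb : Pl F d (Δa ∪ Δb) = Pl F d Δb := by
      rw [hsup, Pl_of_zero hza]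
      exact sup_eq_right.mpr span_one_le_Pl
    rcases hLk with ⟨i, j, hij, x, hxa, hxg⟩ | ⟨i, j, hij, x, hxΓ, hxg⟩
    · have hxx : x = x' := by rw [hsing] at hxa; exact hxa
      have hLkb : Linked G Δb Γ := linked_of_regs hkl hij (hxx ▸ hwit) hxg
      have hbne : Δb ≠ Γ := Ne.symm hΓb
      rcases hI.P2 Δb hb Γ hΓ hbne hLkb with h | h
      · rw [hMb]; exact Or.inr h
      · rw [hMb]; exact Or.inl h
    · have : x ∈ Δa ∩ G.regPair i j :=
        reg_subsingleton (by rw [hsing]; exact Set.inter_subset_left) hxg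
      have hxx : x ∈ Δa ∩ Γ := ⟨this.1, hxΓ⟩
      rw [hI.part.2.2 Δa ha Γ hΓ (Ne.symm hΓa)] at hxx
      exact absurd hxx (Set.notMem_empty x)
  · push_neg at hza
    obtain ⟨y0, hy0, h0⟩ := hza
    have hMa : Pl F d (Δa ∪ Δb) = Pl F d Δa := by
      rcases merge_cmp hd hI ha hb hab hconn with h | h
      · obtain ⟨va, hva⟩ := hI.P1 Δa ha
        obtain ⟨vb, hvb⟩ := hI.P1 Δb hb
        have heq : Pl F d Δa = Pl F d Δb :=
          Pl_eq_of_le_nonzero hva hvb hd hy0 h0 (hI.part.1 Δa ha).2 h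
        rw [hsup, heq, sup_idem]
      · rw [hsup]
        exact sup_eq_left.mpr h
    rw [hMa]
    rcases hPΓ with h | h
    · exact Or.inr h
    · exact Or.inl h

end RegionGraph
namespace RegionGraph

variable {n : ℕ} {G : RegionGraph n} {F : Type} [Field F] {d : G.V → Fin 3 → F}

local notation "av" => (fun _ => (1 : F) : Fin 3 → F)

lemma reg_union_rel (hd : G.Conds123 F d) {I : Set (Set G.V)} (hI : Inv G F d I)
    {Δa Δb : Set G.V} (ha : Δa ∈ I) (hb : Δb ∈ I) (hab : Δa ≠ Δb)
    (hconn : G.ClassesConnected Δa Δb) :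
    ∀ x : G.V, ∀ Γ ∈ I, Γ ≠ Δa → Γ ≠ Δb → x ∈ Γ →
      ∀ i j : Fin 3, i ≠ j → x ∈ G.reg ((Δa ∪ Δb) ∩ G.regPair i j) →
      Pl F d Γ ≤ Pl F d (Δa ∪ Δb) ∨ Pl F d (Δa ∪ Δb) ≤ Pl F d Γ := by
  haveI := G.fintypeV
  haveI : IsIrrefl G.V (Relation.TransGen G.Adj) := ⟨G.acyclic⟩
  have wf := Finite.wellFounded_of_trans_of_irrefl (Relation.TransGen G.Adj)
  intro x
  induction x using wf.induction with
  | _ x ih =>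
  intro Γ hΓ hΓa hΓb hxΓ i j hij hx
  have hMP : (Δa ∪ Δb) ∩ G.regPair i j ⊆ G.regPair i j := Set.inter_subset_right
  cases hx with
  | base hb0 =>
    rcases hb0.1 with hA | hB
    · have : x ∈ Δa ∩ Γ := ⟨hA, hxΓ⟩
      rw [hI.part.2.2 Δa ha Γ hΓ (Ne.symm hΓa)] at this
      exact absurd this (Set.notMem_empty x)
    · have : x ∈ Δb ∩ Γ := ⟨hB, hxΓ⟩
      rw [hI.part.2.2 Δb hb Γ hΓ (Ne.symm hΓb)] at this
      exact absurd this (Set.notMem_empty x)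
  | step hex hall =>
    have hxreg : x ∈ G.reg ((Δa ∪ Δb) ∩ G.regPair i j) := SuperReg.step hex hall
    by_cases hx0 : d x = 0
    · rcases hI.PG Γ hΓ x hxΓ hx0 with hsing | ⟨k, l, hkl, hxg⟩
      · left
        have hzero : ∀ Q ∈ Γ, d Q = 0 := by
          intro Q hQ
          rw [hsing, Set.mem_singleton_iff] at hQ
          rw [hQ]; exact hx0
        rw [Pl_of_zero hzero]
        exact span_one_le_Pl
      · obtain ⟨y, hyx, hc⟩ := reg_descend x hxg hxreg
        rcases hc with ⟨hy1, hy2⟩ | ⟨hy1, hy2⟩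
        · have hyne : y ≠ x := hy1.1.2
          have htg : Relation.TransGen G.Adj y x := by
            rcases Relation.reflTransGen_iff_eq_or_transGen.mp hyx with h | h
            · exact absurd h.symm hyne
            · exact h
          exact ih y htg Γ hΓ hΓa hΓb hy1.1.1 i j hij hy2
        · have hy2' : y ∈ G.reg (Γ ∩ G.regPair k l) :=
            reg_mono (Set.inter_subset_inter Set.diff_subset le_rfl) hy2
          rcases hy1.1 with hA | hB
          · exact link_side hd hI ha hb hab hconn hΓ hΓa hΓb
              (Or.inl ⟨k, l, hkl, y, hA, hy2'⟩)
          · have := link_side hd hI hb ha (Ne.symm hab) (conn_symm hconn) hΓ hΓb hΓa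
              (Or.inl ⟨k, l, hkl, y, hB, hy2'⟩)
            rw [Set.union_comm Δb Δa] at this
            exact this
    · have hdx : d x ∈ Submodule.span F (d '' ((Δa ∪ Δb) ∩ G.regPair i j)) :=
        reg_d_mem_span hd hij hMP hxreg
      obtain ⟨m, hmi, hmj⟩ := third_index hij
      have hdm : d x m = 0 := by
        refine span_coord_zero ?_ hdx
        rintro w ⟨y, hy, rfl⟩
        exact d_coord_zero hd hij hmi hmj hy.2
      have hdPl : d x ∈ Pl F d (Δa ∪ Δb) := by
        refine (Submodule.span_le.mpr ?_) hdx
        rintro w ⟨y, hy, rfl⟩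
        exact d_mem_Pl hy.1
      obtain ⟨vΓ, hvΓ⟩ := hI.P1 Γ hΓ
      obtain ⟨_, vM, hvM⟩ := merge_facts hd hI ha hb hab hconn
      have e1 : Pl F d Γ = Submodule.span F {d x, av} :=
        Pl_eq_pair hvΓ (d_mem_Pl hxΓ) hdm hx0
      have e2 : Pl F d (Δa ∪ Δb) = Submodule.span F {d x, av} :=
        Pl_eq_pair hvM hdPl hdm hx0
      left
      rw [e1, e2]

lemma inv_trivial (hd : G.Conds123 F d) : Inv G F d G.trivialPartition := by
  constructor
  · refine ⟨?_, ?_, ?_⟩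
    · rintro Δ ⟨R, hR, rfl⟩
      exact ⟨⟨R, rfl⟩, by rintro x rfl; exact hR⟩
    · ext x
      constructor
      · rintro ⟨Δ, ⟨R, hR, rfl⟩, hx⟩
        rw [Set.mem_singleton_iff] at hx
        rw [hx]; exact hR
      · intro hx
        exact ⟨{x}, ⟨x, hx, rfl⟩, rfl⟩
    · rintro Δ ⟨R, hR, rfl⟩ Δ' ⟨R', hR', rfl⟩ hne
      ext y
      simp only [Set.mem_inter_iff, Set.mem_singleton_iff, Set.mem_empty_iff_false, iff_false,
        not_and]
      rintro rfl h
      exact hne (by rw [h])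
  · rintro Δ ⟨R, hR, rfl⟩
    refine ⟨d R, ?_⟩
    rintro Q rfl
    exact Submodule.mem_span_pair.mpr ⟨1, 0, by funext t; simp⟩
  · rintro Δ ⟨R, hR, rfl⟩ Γ ⟨R', hR', rfl⟩ hne hLk
    exfalso
    rcases hLk with ⟨i, j, hij, x, hx1, hx2⟩ | ⟨i, j, hij, x, hx1, hx2⟩
    · have hx2' : x ∈ {R'} ∩ G.regPair i j := reg_subsingleton Set.inter_subset_left hx2
      rw [Set.mem_singleton_iff] at hx1
      have := hx2'.1
      rw [Set.mem_singleton_iff] at this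
      exact hne (by rw [← hx1, ← this])
    · have hx2' : x ∈ {R} ∩ G.regPair i j := reg_subsingleton Set.inter_subset_left hx2
      rw [Set.mem_singleton_iff] at hx1
      have := hx2'.1
      rw [Set.mem_singleton_iff] at this
      exact hne (by rw [← hx1, ← this])
  · rintro Δ ⟨R, hR, rfl⟩ _ x hx y hy
    rw [Set.mem_singleton_iff] at hx hy
    rw [hx, hy]
  · rintro Δ ⟨R, hR, rfl⟩ x hx _
    rw [Set.mem_singleton_iff] at hx
    left
    rw [hx]

lemma inv_step (hd : G.Conds123 F d) {I I' : Set (Set G.V)} (hI : Inv G F d I)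
    (hstep : G.IsContractionStep I I') : Inv G F d I' := by
  obtain ⟨Δa, Δb, ha, hb, hab, hconn, rfl⟩ := hstep
  have hdis : Δa ∩ Δb = ∅ := hI.part.2.2 Δa ha Δb hb hab
  have hmem : ∀ Γ ∈ insert (Δa ∪ Δb) (I \ {Δa, Δb}),
      Γ = Δa ∪ Δb ∨ (Γ ∈ I ∧ Γ ≠ Δa ∧ Γ ≠ Δb) := by
    rintro Γ (rfl | ⟨hΓI, hΓn⟩)
    · exact Or.inl rfl
    · simp only [Set.mem_insert_iff, Set.mem_singleton_iff] at hΓn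
      push_neg at hΓn
      exact Or.inr ⟨hΓI, hΓn.1, hΓn.2⟩
  have hMdisj : ∀ Γ ∈ I, Γ ≠ Δa → Γ ≠ Δb → (Δa ∪ Δb) ∩ Γ = ∅ := by
    intro Γ hΓ h1 h2
    rw [Set.union_inter_distrib_right, hI.part.2.2 Δa ha Γ hΓ (Ne.symm h1),
      hI.part.2.2 Δb hb Γ hΓ (Ne.symm h2), Set.union_empty]
  constructor
  · refine ⟨?_, ?_, ?_⟩
    · intro Δ hΔ
      rcases hmem Δ hΔ with rfl | ⟨hΔI, _, _⟩
      · exact ⟨((hI.part.1 Δa ha).1).mono Set.subset_union_left,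
          Set.union_subset (hI.part.1 Δa ha).2 (hI.part.1 Δb hb).2⟩
      · exact hI.part.1 Δ hΔI
    · ext x
      constructor
      · rintro ⟨Δ, hΔ, hx⟩
        rcases hmem Δ hΔ with rfl | ⟨hΔI, _, _⟩
        · rcases hx with h | h
          · exact (hI.part.1 Δa ha).2 h
          · exact (hI.part.1 Δb hb).2 h
        · exact (hI.part.1 Δ hΔI).2 hx
      · intro hx
        have : x ∈ ⋃₀ I := by rw [hI.part.2.1]; exact hx
        obtain ⟨Δ, hΔ, hxΔ⟩ := this
        by_cases hea : Δ = Δa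
        · exact ⟨Δa ∪ Δb, Set.mem_insert _ _, Or.inl (hea ▸ hxΔ)⟩
        by_cases heb : Δ = Δb
        · exact ⟨Δa ∪ Δb, Set.mem_insert _ _, Or.inr (heb ▸ hxΔ)⟩
        · exact ⟨Δ, Set.mem_insert_of_mem _ ⟨hΔ, by simp [hea, heb]⟩, hxΔ⟩
    · intro Δ hΔ Γ hΓ hne
      rcases hmem Δ hΔ with rfl | ⟨hΔI, hΔa, hΔb⟩
      · rcases hmem Γ hΓ with rfl | ⟨hΓI, hΓa, hΓb⟩
        · exact absurd rfl hne
        · exact hMdisj Γ hΓI hΓa hΓb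
      · rcases hmem Γ hΓ with rfl | ⟨hΓI, hΓa, hΓb⟩
        · rw [Set.inter_comm]; exact hMdisj Δ hΔI hΔa hΔb
        · exact hI.part.2.2 Δ hΔI Γ hΓI hne
  · intro Δ hΔ
    rcases hmem Δ hΔ with rfl | ⟨hΔI, _, _⟩
    · exact (merge_facts hd hI ha hb hab hconn).2
    · exact hI.P1 Δ hΔI
  · intro Δ hΔ Γ hΓ hne hLk
    rcases hmem Δ hΔ with rfl | ⟨hΔI, hΔa, hΔb⟩
    · rcases hmem Γ hΓ with rfl | ⟨hΓI, hΓa, hΓb⟩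
      · exact absurd rfl hne
      · -- Δ = M, Γ old
        rcases hLk with ⟨i, j, hij, x, hxM, hxg⟩ | ⟨i, j, hij, x, hxΓ, hxg⟩
        · -- x ∈ M, x ∈ reg(Γ ∩ P_ij)
          rcases hxM with hA | hB
          · rcases link_side hd hI ha hb hab hconn hΓI hΓa hΓb
              (Or.inl ⟨i, j, hij, x, hA, hxg⟩) with h | h
            · exact Or.inr h
            · exact Or.inl h
          · have := link_side hd hI hb ha (Ne.symm hab) (conn_symm hconn) hΓI hΓb hΓa
              (Or.inl ⟨i, j, hij, x, hB, hxg⟩)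
            rw [Set.union_comm Δb Δa] at this
            rcases this with h | h
            · exact Or.inr h
            · exact Or.inl h
        · -- x ∈ Γ, x ∈ reg(M ∩ P_ij)
          rcases reg_union_rel hd hI ha hb hab hconn x Γ hΓI hΓa hΓb hxΓ i j hij hxg
            with h | h
          · exact Or.inr h
          · exact Or.inl h
    · rcases hmem Γ hΓ with rfl | ⟨hΓI, hΓa, hΓb⟩
      · -- Γ = M, Δ old
        rcases hLk with ⟨i, j, hij, x, hxΔ, hxg⟩ | ⟨i, j, hij, x, hxM, hxg⟩
        · exact reg_union_rel hd hI ha hb hab hconn x Δ hΔI hΔa hΔb hxΔ i j hij hxg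
        · rcases hxM with hA | hB
          · exact link_side hd hI ha hb hab hconn hΔI hΔa hΔb
              (Or.inl ⟨i, j, hij, x, hA, hxg⟩)
          · have := link_side hd hI hb ha (Ne.symm hab) (conn_symm hconn) hΔI hΔb hΔa
              (Or.inl ⟨i, j, hij, x, hB, hxg⟩)
            rw [Set.union_comm Δb Δa] at this
            exact this
      · exact hI.P2 Δ hΔI Γ hΓI hne hLk
  · intro Δ hΔ hz x hx y hy
    rcases hmem Δ hΔ with rfl | ⟨hΔI, _, _⟩
    · exfalso
      obtain ⟨_, _, _, hnzb⟩ := zero_side hd hI ha hb hab hconn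
        (fun Q hQ => hz Q (Or.inl hQ))
      exact hnzb (fun Q hQ => hz Q (Or.inr hQ))
    · exact hI.PZ Δ hΔI hz x hx y hy
  · intro Δ hΔ x hx hx0
    rcases hmem Δ hΔ with rfl | ⟨hΔI, _, _⟩
    · right
      rcases hx with hA | hB
      · rcases hI.PG Δa ha x hA hx0 with hsing | ⟨i, j, hij, hxg⟩
        · -- Δa = {x} : use the connection witness
          have hza : ∀ Q ∈ Δa, d Q = 0 := by
            intro Q hQ
            rw [hsing, Set.mem_singleton_iff] at hQ
            rw [hQ]; exact hx0
          obtain ⟨x', hsing', ⟨k, l, hkl, hwit⟩, _⟩ := zero_side hd hI ha hb hab hconn hza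
          have hxx : x = x' := by
            have : x ∈ Δa := hA
            rw [hsing', Set.mem_singleton_iff] at this
            exact this
          refine ⟨k, l, hkl, ?_⟩
          refine reg_mono (Set.inter_subset_inter ?_ le_rfl) (hxx ▸ hwit)
          intro y hy
          refine ⟨Or.inr hy, ?_⟩
          intro hyx
          rw [Set.mem_singleton_iff] at hyx
          have : x ∈ Δa ∩ Δb := ⟨hA, hyx ▸ hy⟩
          rw [hdis] at this
          exact this
        · refine ⟨i, j, hij, ?_⟩
          refine reg_mono (Set.inter_subset_inter ?_ le_rfl) hxg
          exact Set.diff_subset_diff_left Set.subset_union_left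
      · rcases hI.PG Δb hb x hB hx0 with hsing | ⟨i, j, hij, hxg⟩
        · have hzb : ∀ Q ∈ Δb, d Q = 0 := by
            intro Q hQ
            rw [hsing, Set.mem_singleton_iff] at hQ
            rw [hQ]; exact hx0
          obtain ⟨x', hsing', ⟨k, l, hkl, hwit⟩, _⟩ := zero_side hd hI hb ha (Ne.symm hab)
            (conn_symm hconn) hzb
          have hxx : x = x' := by
            have : x ∈ Δb := hB
            rw [hsing', Set.mem_singleton_iff] at this
            exact this
          refine ⟨k, l, hkl, ?_⟩
          refine reg_mono (Set.inter_subset_inter ?_ le_rfl) (hxx ▸ hwit)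
          intro y hy
          refine ⟨Or.inl hy, ?_⟩
          intro hyx
          rw [Set.mem_singleton_iff] at hyx
          have : x ∈ Δa ∩ Δb := ⟨hyx ▸ hy, hB⟩
          rw [hdis] at this
          exact this
        · refine ⟨i, j, hij, ?_⟩
          refine reg_mono (Set.inter_subset_inter ?_ le_rfl) hxg
          exact Set.diff_subset_diff_left Set.subset_union_right
    · rcases hI.PG Δ hΔI x hx hx0 with hsing | h
      · exact Or.inl hsing
      · exact Or.inr h

end RegionGraph
/-- For a character partition `Ic` of `Π` and a family `{d_R}` satisfying
conditions (1)–(3): within each `Δ_{i₁,i₂}`, all vectors are multiples of any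
fixed nonzero one. -/
theorem character_partition_span {n : ℕ} (G : RegionGraph n)
    (hA : G.Assumption1) (hTS : G.TerminalSeparable)
    (F : Type) [Field F] [Fintype F] (d : G.V → Fin 3 → F)
    (hd : G.Conds123 F d)
    (Ic : Set (Set G.V)) (hchar : G.IsCharacterPartition Ic) :
    ∀ Δ ∈ Ic, ∀ i₁ i₂ : Fin 3, i₁ ≠ i₂ →
      ∀ Q ∈ Δ ∩ G.regPair i₁ i₂, d Q ≠ 0 →
        ∀ Q' ∈ Δ ∩ G.regPair i₁ i₂, d Q' ∈ Submodule.span F {d Q} := by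
  obtain ⟨L, c, h0, hL, hsteps, _⟩ := hchar
  have hinv : ∀ ℓ, ℓ ≤ L → RegionGraph.Inv G F d (c ℓ) := by
    intro ℓ
    induction ℓ with
    | zero => intro _; rw [h0]; exact RegionGraph.inv_trivial hd
    | succ k ih =>
      intro hk
      have hkL : k < L := hk
      exact RegionGraph.inv_step hd (ih (le_of_lt hkL)) (hsteps k hkL).2
  have hIc : RegionGraph.Inv G F d Ic := hL ▸ hinv L le_rfl
  intro Δ hΔ i1 i2 h12 Q hQ hQ0 Q' hQ'
  obtain ⟨v, hv⟩ := hIc.P1 Δ hΔ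
  obtain ⟨m, hm1, hm2⟩ := RegionGraph.third_index h12
  exact RegionGraph.span_line (hv Q hQ.1) (hv Q' hQ'.1)
    (RegionGraph.d_coord_zero hd h12 hm1 hm2 hQ.2)
    (RegionGraph.d_coord_zero hd h12 hm1 hm2 hQ'.2) hQ0

end SumNetworksPaper
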